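/- arXiv:2109.11169 — 4 statements merged into one kernel-verified Lean document; each statement's English description precedes it below -/
import Mathlib

section
/- Let f : ℝⁿ → ℝⁿ be an affine map and v : ℝⁿ → ℝ a convex, radially unbounded function that is bounded from below. Let K := {x ∈ ℝⁿ : v(x) ≤ R} for some R ∈ ℝ. If v(f(x)) ≤ v(x) for all x on the boundary ∂K of K, then K is a compact convex set that is forward invariant for the system x⁺ = f(x), i.e., f(K) ⊆ K. -/
/-!
Through any point `x` of the compact set `K` runs a line, and the first and last points of `K` on
it are boundary points `y`, `z` with `x ∈ [y, z]`. The affine map sends this segment onto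
`[f y, f z]`, on which the convex `v` is at most `max (v (f y)) (v (f z)) ≤ max (v y) (v z) ≤ R`.
Compactness and convexity of `K` are immediate from radial unboundedness and convexity of `v`.
-/

open Set Convex

section Order

variable {α : Type*} [LinearOrder α] [TopologicalSpace α] [OrderTopology α] [DenselyOrdered α]

theorem IsGreatest.mem_frontier [NoMaxOrder α] {S : Set α} {b : α} (h : IsGreatest S b) :
    b ∈ frontier S := by
  refine ⟨subset_closure h.1, fun hb => ?_⟩
  have : b ∈ interior (Iic b) := interior_mono (fun _ hy => h.2 hy) hb
  simp at this

theorem IsLeast.mem_frontier [NoMinOrder α] {S : Set α} {a : α} (h : IsLeast S a) :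
    a ∈ frontier S := by
  refine ⟨subset_closure h.1, fun ha => ?_⟩
  have : a ∈ interior (Ici a) := interior_mono (fun _ hy => h.2 hy) ha
  simp at this

end Order

theorem Continuous.isCompact_setOf_le_of_radially_unbounded {E : Type*} [NormedAddCommGroup E]
    [ProperSpace E] {v : E → ℝ} (hv : Continuous v)
    (hradial : ∀ c : ℝ, ∃ r : ℝ, ∀ x, r ≤ ‖x‖ → c ≤ v x) (R : ℝ) :
    IsCompact {x | v x ≤ R} := by
  obtain ⟨r, hr⟩ := hradial (R + 1)
  refine Metric.isCompact_of_isClosed_isBounded (isClosed_le hv continuous_const)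
    ((Metric.isBounded_closedBall (x := 0) (r := r)).subset fun x hx => ?_)
  by_contra h
  rw [Metric.mem_closedBall, dist_zero_right, not_le] at h
  linarith [hr x h.le, mem_ofPred_eq.mp hx]

section

variable {E : Type*} [NormedAddCommGroup E] [NormedSpace ℝ E]

theorem IsCompact.exists_mem_frontier_mem_segment [Nontrivial E] {K : Set E} (hK : IsCompact K)
    {x : E} (hx : x ∈ K) : ∃ y ∈ frontier K, ∃ z ∈ frontier K, x ∈ [y -[ℝ] z] := by
  obtain ⟨e, he⟩ := exists_ne (0 : E)
  let g : ℝ →ᵃ[ℝ] E := AffineMap.lineMap x (x + e)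
  have hg : Topology.IsClosedEmbedding g := by
    convert (Homeomorph.addRight x).isClosedEmbedding.comp
      (isClosedEmbedding_smul_left (𝕜 := ℝ) he) using 1
    ext t
    simp [g, AffineMap.lineMap_apply]
  have hS : IsCompact (g ⁻¹' K) := hg.isCompact_preimage hK
  have h0 : (0 : ℝ) ∈ g ⁻¹' K := by simpa [g] using hx
  obtain ⟨a, ha⟩ := hS.exists_isLeast ⟨0, h0⟩
  obtain ⟨b, hb⟩ := hS.exists_isGreatest ⟨0, h0⟩
  have hfr := hg.continuous.frontier_preimage_subset K
  refine ⟨g a, hfr ha.mem_frontier, g b, hfr hb.mem_frontier, ?_⟩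
  rw [← image_segment, segment_eq_Icc (ha.2 hb.1)]
  exact ⟨0, ⟨ha.2 h0, hb.2 h0⟩, by simp [g]⟩

theorem ConvexOn.mapsTo_setOf_le {v : E → ℝ} {R : ℝ} (hv : ConvexOn ℝ univ v)
    (hK : IsCompact {x | v x ≤ R}) (f : E →ᵃ[ℝ] E)
    (hdec : ∀ x ∈ frontier {x | v x ≤ R}, v (f x) ≤ v x) :
    MapsTo f {x | v x ≤ R} {x | v x ≤ R} := by
  intro x hx
  rcases subsingleton_or_nontrivial E with hE | hE
  · rwa [Subsingleton.elim (f x) x]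
  obtain ⟨y, hy, z, hz, hxyz⟩ := hK.exists_mem_frontier_mem_segment hx
  have hyz : f x ∈ [f y -[ℝ] f z] := image_segment ℝ f y z ▸ mem_image_of_mem f hxyz
  have hfr := hK.isClosed.frontier_subset
  calc v (f x) ≤ max (v (f y)) (v (f z)) := hv.le_on_segment trivial trivial hyz
    _ ≤ max (v y) (v z) := max_le_max (hdec y hy) (hdec z hz)
    _ ≤ R := max_le (hfr hy) (hfr hz)

end

theorem sublevel_set_forward_invariant_general {n : ℕ}
    (f : (Fin n → ℝ) →ᵃ[ℝ] (Fin n → ℝ))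
    (v : (Fin n → ℝ) → ℝ) (R : ℝ)
    (hconv : ConvexOn ℝ Set.univ v)
    (hcont : Continuous v)
    (hradial : ∀ c : ℝ, ∃ r : ℝ, ∀ x : Fin n → ℝ, r ≤ ‖x‖ → c ≤ v x)
    (K : Set (Fin n → ℝ)) (hK : K = {x | v x ≤ R})
    (hdec : ∀ x ∈ frontier K, v (f x) ≤ v x) :
    IsCompact K ∧ Convex ℝ K ∧ ∀ x ∈ K, f x ∈ K := by
  subst hK
  have hcompact := hcont.isCompact_setOf_le_of_radially_unbounded hradial R
  exact ⟨hcompact, by simpa using hconv.convex_le R, hconv.mapsTo_setOf_le hcompact f hdec⟩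

theorem sublevel_set_forward_invariant {n : ℕ}
    (f : (Fin n → ℝ) →ᵃ[ℝ] (Fin n → ℝ))
    (v : (Fin n → ℝ) → ℝ) (R : ℝ)
    (hconv : ConvexOn ℝ Set.univ v)
    (hcont : Continuous v)
    (hbdd : ∃ m : ℝ, ∀ x, m ≤ v x)
    (hradial : ∀ c : ℝ, ∃ r : ℝ, ∀ x : Fin n → ℝ, r ≤ ‖x‖ → c ≤ v x)
    (K : Set (Fin n → ℝ)) (hK : K = {x | v x ≤ R})
    (hdec : ∀ x ∈ frontier K, v (f x) ≤ v x) :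
    IsCompact K ∧ Convex ℝ K ∧ ∀ x ∈ K, f x ∈ K :=
  sublevel_set_forward_invariant_general f v R hconv hcont hradial K hK hdec
end

section
/- Let v(x) = √(xᵀPx) be a norm on ℝⁿ induced by an inner product (P symmetric positive definite), let f(x) = Ax + b be an affine map, let X ⊆ ℝⁿ be a symmetric C-set (compact, convex, 0 ∈ interior(X), and x ∈ X ⟹ −x ∈ X), and let ρ ≥ 0. If v(Ax + b) ≤ ρ v(x) for all x ∈ ∂X, then v(Ax) ≤ ρ v(x) for all x ∈ ℝⁿ. -/
open scoped Matrix

/-!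
On the frontier of `X` the hypothesis is available at both `y` and `-y`, i.e. for `A y + b` and
`-A y + b`. By the parallelogram law `2 v(A y)² ≤ v(b + A y)² + v(b - A y)²`, so the offset `b`
can be dropped and `v (A y) ≤ ρ v y` on the frontier. Both sides are positively homogeneous and
every nonzero vector is a positive multiple of a frontier point (rescale by the gauge of `X`),
so the inequality extends to all of `ℝⁿ`.
-/

theorem le_of_parallelogram {E : Type*} [AddCommGroup E] {v : E → ℝ} (hv : ∀ x, 0 ≤ v x)
    (hpar : ∀ u w, v (u + w) ^ 2 + v (u - w) ^ 2 = 2 * v u ^ 2 + 2 * v w ^ 2)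
    {u w : E} {r : ℝ} (hadd : v (w + u) ≤ r) (hsub : v (w - u) ≤ r) : v u ≤ r := by
  have hr : 0 ≤ r := (hv _).trans hadd
  have hsq : 2 * v u ^ 2 + 2 * v w ^ 2 ≤ 2 * r ^ 2 := by
    nlinarith [hpar w u, pow_le_pow_left₀ (hv _) hadd 2, pow_le_pow_left₀ (hv _) hsub 2]
  exact le_of_sq_le_sq (by nlinarith [sq_nonneg (v w)]) hr

theorem neg_mem_frontier_of_forall_neg_mem {E : Type*} [TopologicalSpace E] [AddGroup E]
    [IsTopologicalAddGroup E] {X : Set E} (hX : ∀ x ∈ X, -x ∈ X) {x : E} (hx : x ∈ frontier X) :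
    -x ∈ frontier X := by
  have hneg : Neg.neg ⁻¹' X = X :=
    Set.ext fun z => ⟨fun h => neg_neg z ▸ hX _ h, hX z⟩
  have := (Homeomorph.neg E).preimage_frontier X
  rw [Homeomorph.coe_neg, hneg] at this
  rwa [← this, Set.mem_preimage, neg_neg]

theorem le_of_forall_mem_frontier_le {E : Type*} [NormedAddCommGroup E] [NormedSpace ℝ E]
    {X : Set E} (hXb : Bornology.IsBounded X) (hXconv : Convex ℝ X) (hX0 : X ∈ nhds 0)
    {f g : E → ℝ} (hf : ∀ c : ℝ, 0 ≤ c → ∀ x, f (c • x) = c * f x)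
    (hg : ∀ c : ℝ, 0 ≤ c → ∀ x, g (c • x) = c * g x)
    (hfg : ∀ y ∈ frontier X, f y ≤ g y) (x : E) : f x ≤ g x := by
  rcases eq_or_ne x 0 with rfl | hx
  · have hf0 := hf 0 le_rfl 0
    have hg0 := hg 0 le_rfl 0
    simp only [smul_zero, zero_mul] at hf0 hg0
    rw [hf0, hg0]
  have hpos : 0 < gauge X x :=
    (gauge_pos (absorbent_nhds_zero hX0) (NormedSpace.isVonNBounded_of_isBounded ℝ hXb)).2 hx
  set y := (gauge X x)⁻¹ • x
  have hy : y ∈ frontier X := by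
    rw [← gauge_eq_one_iff_mem_frontier hXconv hX0, gauge_smul_of_nonneg (inv_nonneg.2 hpos.le),
      smul_eq_mul, inv_mul_cancel₀ hpos.ne']
  have hxy : x = gauge X x • y := by rw [smul_inv_smul₀ hpos.ne']
  rw [hxy, hf _ hpos.le, hg _ hpos.le]
  exact mul_le_mul_of_nonneg_left (hfg y hy) hpos.le

namespace Matrix

variable {n : Type*} [Fintype n]

theorem sqrt_dotProduct_mulVec_smul (P : Matrix n n ℝ) {c : ℝ} (hc : 0 ≤ c) (x : n → ℝ) :
    √((c • x) ⬝ᵥ P *ᵥ (c • x)) = c * √(x ⬝ᵥ P *ᵥ x) := by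
  rw [mulVec_smul, smul_dotProduct, dotProduct_smul, smul_eq_mul, smul_eq_mul, ← mul_assoc,
    ← sq, Real.sqrt_mul (sq_nonneg c), Real.sqrt_sq hc]

theorem PosSemidef.sqrt_dotProduct_mulVec_parallelogram {P : Matrix n n ℝ} (hP : P.PosSemidef)
    (u w : n → ℝ) :
    √((u + w) ⬝ᵥ P *ᵥ (u + w)) ^ 2 + √((u - w) ⬝ᵥ P *ᵥ (u - w)) ^ 2 =
      2 * √(u ⬝ᵥ P *ᵥ u) ^ 2 + 2 * √(w ⬝ᵥ P *ᵥ w) ^ 2 := by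
  have hq : ∀ x : n → ℝ, √(x ⬝ᵥ P *ᵥ x) ^ 2 = x ⬝ᵥ P *ᵥ x := fun x =>
    Real.sq_sqrt (by simpa using hP.dotProduct_mulVec_nonneg x)
  rw [hq, hq, hq, hq]
  simp only [mulVec_add, mulVec_sub, add_dotProduct, sub_dotProduct, dotProduct_add,
    dotProduct_sub]
  ring

end Matrix

theorem contraction_on_boundary_implies_linear_contraction_general {n : ℕ}
    (P : Matrix (Fin n) (Fin n) ℝ) (hP : P.PosDef)
    (v : (Fin n → ℝ) → ℝ) (hv : ∀ x, v x = Real.sqrt (x ⬝ᵥ P.mulVec x))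
    (A : Matrix (Fin n) (Fin n) ℝ) (b : Fin n → ℝ)
    (X : Set (Fin n → ℝ)) (hXc : IsCompact X) (hXconv : Convex ℝ X)
    (hX0 : (0 : Fin n → ℝ) ∈ interior X) (hXsym : ∀ x ∈ X, -x ∈ X)
    (ρ : ℝ)
    (hcontr : ∀ x ∈ frontier X, v (A.mulVec x + b) ≤ ρ * v x) :
    ∀ x : Fin n → ℝ, v (A.mulVec x) ≤ ρ * v x := by
  have hv_nonneg : ∀ x, 0 ≤ v x := fun x => hv x ▸ Real.sqrt_nonneg _
  have hv_smul : ∀ c : ℝ, 0 ≤ c → ∀ x, v (c • x) = c * v x := fun c hc x => by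
    simp only [hv, P.sqrt_dotProduct_mulVec_smul hc]
  have hv_neg : ∀ x, v (-x) = v x := fun x => by
    simp only [hv, Matrix.mulVec_neg, neg_dotProduct, dotProduct_neg, neg_neg]
  have hv_par : ∀ u w, v (u + w) ^ 2 + v (u - w) ^ 2 = 2 * v u ^ 2 + 2 * v w ^ 2 := by
    simpa only [hv] using hP.posSemidef.sqrt_dotProduct_mulVec_parallelogram
  have hfrontier : ∀ y ∈ frontier X, v (A *ᵥ y) ≤ ρ * v y := fun y hy => by
    have hneg := hcontr (-y) (neg_mem_frontier_of_forall_neg_mem hXsym hy)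
    rw [Matrix.mulVec_neg, neg_add_eq_sub, hv_neg] at hneg
    exact le_of_parallelogram hv_nonneg hv_par (add_comm b _ ▸ hcontr y hy) hneg
  refine le_of_forall_mem_frontier_le hXc.isBounded hXconv (mem_interior_iff_mem_nhds.1 hX0)
    (fun c hc x => ?_) (fun c hc x => ?_) hfrontier
  · rw [Matrix.mulVec_smul, hv_smul c hc]
  · rw [hv_smul c hc]; ring

theorem contraction_on_boundary_implies_linear_contraction {n : ℕ}
    (P : Matrix (Fin n) (Fin n) ℝ) (hP : P.PosDef)
    (v : (Fin n → ℝ) → ℝ) (hv : ∀ x, v x = Real.sqrt (x ⬝ᵥ P.mulVec x))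
    (A : Matrix (Fin n) (Fin n) ℝ) (b : Fin n → ℝ)
    (X : Set (Fin n → ℝ)) (hXc : IsCompact X) (hXconv : Convex ℝ X)
    (hX0 : (0 : Fin n → ℝ) ∈ interior X) (hXsym : ∀ x ∈ X, -x ∈ X)
    (ρ : ℝ) (hρ : 0 ≤ ρ)
    (hcontr : ∀ x ∈ frontier X, v (A.mulVec x + b) ≤ ρ * v x) :
    ∀ x : Fin n → ℝ, v (A.mulVec x) ≤ ρ * v x :=
  contraction_on_boundary_implies_linear_contraction_general P hP v hv A b X hXc hXconv hX0 hXsym ρ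
    hcontr
end

section
/- Let v be a norm on ℝⁿ induced by an inner product, f(x) = Ax + b affine, X ⊆ ℝⁿ a symmetric C-set and ρ ≥ 0. If v(Ax + b) ≤ ρ v(x) for all x ∈ ∂X, then v(Ax + b) ≤ ρ v(x) for all x ∈ ℝⁿ \ X. -/
/-!
Write `x = g • y` with `g > 1` and `y`, `-y` on the frontier of `X` (`g` is the gauge of `X`
at `x`). Then `g • y` is the affine combination `t • y + (1 - t) • (-y)` with `t = (g + 1) / 2`,
so `f x = t • f y + (1 - t) • f (-y)` for the affine map `f`, and the triangle inequality for the
seminorm `v` gives `v (f x) ≤ (t + (t - 1)) * ρ * v y = ρ * v x`.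
-/

open scoped Matrix Topology

section

variable {E F : Type*} [AddCommGroup E] [Module ℝ E] [AddCommGroup F] [Module ℝ F]

theorem AffineMap.seminorm_apply_smul_le (f : E →ᵃ[ℝ] F) (p : Seminorm ℝ F) (q : Seminorm ℝ E)
    {ρ g : ℝ} {y : E} (hg : 1 ≤ g) (hy : p (f y) ≤ ρ * q y) (hny : p (f (-y)) ≤ ρ * q (-y)) :
    p (f (g • y)) ≤ ρ * q (g • y) := by
  set t := (g + 1) / 2 with ht_def
  have hline : g • y = AffineMap.lineMap (-y) y t := by
    rw [AffineMap.lineMap_apply_module]; module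
  have ht : 1 ≤ t := by rw [ht_def]; linarith
  calc p (f (g • y)) = p ((1 - t) • f (-y) + t • f y) := by
        rw [hline, f.apply_lineMap, AffineMap.lineMap_apply_module]
    _ ≤ (t - 1) * p (f (-y)) + t * p (f y) := by
        refine (map_add_le_add p _ _).trans_eq ?_
        rw [map_smul_eq_mul, map_smul_eq_mul, Real.norm_eq_abs, Real.norm_eq_abs,
          abs_of_nonpos (by linarith), abs_of_nonneg (by linarith)]
        ring
    _ ≤ (t - 1) * (ρ * q (-y)) + t * (ρ * q y) := by gcongr
    _ = ρ * q (g • y) := by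
        rw [map_neg_eq_map, map_smul_eq_mul, Real.norm_of_nonneg (by linarith), ht_def]; ring

end

section

variable {E : Type*} [AddCommGroup E] [Module ℝ E] [TopologicalSpace E] [IsTopologicalAddGroup E]
  [ContinuousSMul ℝ E] {X : Set E}

theorem Convex.exists_one_lt_eq_smul_mem_frontier (hX : Convex ℝ X) (hX₀ : X ∈ 𝓝 0)
    (hXc : IsClosed X) {x : E} (hx : x ∉ X) : ∃ g : ℝ, 1 < g ∧ ∃ y ∈ frontier X, x = g • y := by
  have hg : 1 < gauge X x := by
    rw [← not_le, gauge_le_one_iff_mem_closure hX hX₀, hXc.closure_eq]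
    exact hx
  have hg₀ : gauge X x ≠ 0 := by positivity
  refine ⟨gauge X x, hg, (gauge X x)⁻¹ • x, ?_, by rw [smul_inv_smul₀ hg₀]⟩
  rw [← gauge_eq_one_iff_mem_frontier hX hX₀, gauge_smul_of_nonneg (by positivity), smul_eq_mul,
    inv_mul_cancel₀ hg₀]

theorem Convex.neg_mem_frontier (hX : Convex ℝ X) (hX₀ : X ∈ 𝓝 0) (hXsym : ∀ x ∈ X, -x ∈ X)
    {y : E} (hy : y ∈ frontier X) : -y ∈ frontier X := by
  rw [← gauge_eq_one_iff_mem_frontier hX hX₀] at hy ⊢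
  rwa [gauge_neg hXsym]

end

theorem Matrix.PosSemidef.exists_seminorm_eq_sqrt_dotProduct_mulVec {n : Type*} [Fintype n]
    {P : Matrix n n ℝ} (hP : P.PosSemidef) :
    ∃ p : Seminorm ℝ (n → ℝ), ∀ x, p x = √(x ⬝ᵥ P *ᵥ x) := by
  let _ := P.toSeminormedAddCommGroup hP
  let _ := P.toInnerProductSpace hP
  refine ⟨normSeminorm ℝ (n → ℝ), fun x => ?_⟩
  rw [coe_normSeminorm, @norm_eq_sqrt_re_inner ℝ]
  exact congrArg _ (dotProduct_comm _ _)

theorem contraction_outside_symmetric_Cset_general {n : ℕ}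
    (P : Matrix (Fin n) (Fin n) ℝ) (hP : P.PosDef)
    (v : (Fin n → ℝ) → ℝ) (hv : ∀ x, v x = Real.sqrt (x ⬝ᵥ P.mulVec x))
    (A : Matrix (Fin n) (Fin n) ℝ) (b : Fin n → ℝ)
    (X : Set (Fin n → ℝ)) (hXc : IsCompact X) (hXconv : Convex ℝ X)
    (hX0 : (0 : Fin n → ℝ) ∈ interior X) (hXsym : ∀ x ∈ X, -x ∈ X)
    (ρ : ℝ)
    (hcontr : ∀ x ∈ frontier X, v (A.mulVec x + b) ≤ ρ * v x) :
    ∀ x : Fin n → ℝ, x ∉ X → v (A.mulVec x + b) ≤ ρ * v x := by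
  intro x hx
  have hX₀ : X ∈ 𝓝 0 := mem_interior_iff_mem_nhds.mp hX0
  obtain ⟨g, hg, y, hy, rfl⟩ := hXconv.exists_one_lt_eq_smul_mem_frontier hX₀ hXc.isClosed hx
  obtain ⟨p, hp⟩ := hP.posSemidef.exists_seminorm_eq_sqrt_dotProduct_mulVec
  obtain rfl : v = p := funext fun z => (hv z).trans (hp z).symm
  let f : (Fin n → ℝ) →ᵃ[ℝ] (Fin n → ℝ) := A.toLin'.toAffineMap + AffineMap.const ℝ _ b
  change ∀ z ∈ frontier X, p (f z) ≤ ρ * p z at hcontr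
  exact f.seminorm_apply_smul_le p p hg.le (hcontr y hy)
    (hcontr (-y) (hXconv.neg_mem_frontier hX₀ hXsym hy))

theorem contraction_outside_symmetric_Cset {n : ℕ}
    (P : Matrix (Fin n) (Fin n) ℝ) (hP : P.PosDef)
    (v : (Fin n → ℝ) → ℝ) (hv : ∀ x, v x = Real.sqrt (x ⬝ᵥ P.mulVec x))
    (A : Matrix (Fin n) (Fin n) ℝ) (b : Fin n → ℝ)
    (X : Set (Fin n → ℝ)) (hXc : IsCompact X) (hXconv : Convex ℝ X)
    (hX0 : (0 : Fin n → ℝ) ∈ interior X) (hXsym : ∀ x ∈ X, -x ∈ X)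
    (ρ : ℝ) (hρ : 0 ≤ ρ)
    (hcontr : ∀ x ∈ frontier X, v (A.mulVec x + b) ≤ ρ * v x) :
    ∀ x : Fin n → ℝ, x ∉ X → v (A.mulVec x + b) ≤ ρ * v x :=
  contraction_outside_symmetric_Cset_general P hP v hv A b X hXc hXconv hX0 hXsym ρ hcontr
end

section
/- Let v be a norm induced by an inner product on ℝⁿ, X a symmetric C-set, ρ < 1, and suppose v(A_i x + b_i) ≤ ρ v(x) for all x ∈ ∂X and all i ∈ {1,…,M}. Then the set K := {x : v(x) ≤ max_{y∈∂X} v(y)} satisfies X ⊆ K and v(A_i x + b_i) < v(x) for every x ∉ K and every i. -/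
/-! Every `x ≠ 0` is `gauge X x • y` for some `y ∈ ∂X`, so `v x ≤ gauge X x * max_{∂X} v`:
hence `X ⊆ K`, and `gauge X x > 1` for `x ∉ K`. Since `X` is symmetric, `-y ∈ ∂X` as well, and
subadditivity and homogeneity of `v` carry the contraction from `±y` out to `x = gauge X x • y`,
giving `v (A x + b) ≤ ρ v x < v x`. -/

open scoped Matrix Topology

noncomputable def Matrix.PosSemidef.seminorm {n : Type*} [Fintype n] {P : Matrix n n ℝ}
    (hP : P.PosSemidef) : Seminorm ℝ (n → ℝ) :=
  letI := P.toSeminormedAddCommGroup hP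
  letI := P.toInnerProductSpace hP
  normSeminorm ℝ (n → ℝ)

namespace Matrix.PosSemidef

variable {n : Type*} [Fintype n] {P : Matrix n n ℝ} (hP : P.PosSemidef)

theorem seminorm_apply (x : n → ℝ) : hP.seminorm x = √(x ⬝ᵥ P *ᵥ x) := by
  rw [dotProduct_comm]
  rfl

theorem continuous_seminorm : Continuous hP.seminorm := by
  simp only [funext hP.seminorm_apply]
  fun_prop

end Matrix.PosSemidef

namespace Seminorm

variable {E F : Type*} [AddCommGroup E] [Module ℝ E] [AddCommGroup F] [Module ℝ F]
  (p : Seminorm ℝ E) (q : Seminorm ℝ F) (L : E →ₗ[ℝ] F) (b : F) {ρ : ℝ}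

/-- `L (c • y) + b` is the combination `(c + 1) / 2 • (L y + b) - (c - 1) / 2 • (L (-y) + b)`,
whose coefficients have absolute values summing to `c`. -/
theorem affine_bound_smul_of_one_le {y : E} (hy : q (L y + b) ≤ ρ * p y)
    (hny : q (L (-y) + b) ≤ ρ * p y) {c : ℝ} (hc : 1 ≤ c) :
    q (L (c • y) + b) ≤ ρ * p (c • y) := by
  have hsplit : L (c • y) + b = ((c + 1) / 2) • (L y + b) - ((c - 1) / 2) • (L (-y) + b) := by
    simp only [map_smul, map_neg, smul_add, smul_neg]
    module
  calc q (L (c • y) + b)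
      ≤ (c + 1) / 2 * q (L y + b) + (c - 1) / 2 * q (L (-y) + b) := by
        rw [hsplit]
        refine (map_sub_le_add q _ _).trans_eq ?_
        rw [map_smul_eq_mul, map_smul_eq_mul, Real.norm_of_nonneg (by linarith),
          Real.norm_of_nonneg (by linarith)]
    _ ≤ (c + 1) / 2 * (ρ * p y) + (c - 1) / 2 * (ρ * p y) := by
        gcongr
    _ = ρ * p (c • y) := by
        rw [map_smul_eq_mul, Real.norm_of_nonneg (by linarith)]
        ring

end Seminorm

section gauge

variable {E F : Type*} [NormedAddCommGroup E] [NormedSpace ℝ E] [AddCommGroup F] [Module ℝ F]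
  {s : Set E}

theorem exists_mem_frontier_gauge_smul_eq (hc : Convex ℝ s) (hs₀ : s ∈ 𝓝 0)
    (hb : Bornology.IsBounded s) {x : E} (hx : x ≠ 0) :
    ∃ y ∈ frontier s, gauge s x • y = x := by
  have hpos : 0 < gauge s x :=
    (gauge_pos (absorbent_nhds_zero hs₀) ((NormedSpace.isVonNBounded_iff ℝ).2 hb)).2 hx
  refine ⟨(gauge s x)⁻¹ • x, ?_, smul_inv_smul₀ hpos.ne' x⟩
  rw [← gauge_eq_one_iff_mem_frontier hc hs₀, gauge_smul_of_nonneg (inv_nonneg.2 hpos.le),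
    smul_eq_mul, inv_mul_cancel₀ hpos.ne']

theorem Seminorm.le_gauge_mul_of_frontier (p : Seminorm ℝ E) (hc : Convex ℝ s)
    (hs₀ : s ∈ 𝓝 0) (hb : Bornology.IsBounded s) {S : ℝ} (hS : ∀ y ∈ frontier s, p y ≤ S)
    (x : E) : p x ≤ gauge s x * S := by
  rcases eq_or_ne x 0 with rfl | hx
  · simp
  obtain ⟨y, hy, hxy⟩ := exists_mem_frontier_gauge_smul_eq hc hs₀ hb hx
  calc p x = gauge s x * p y := by
        conv_lhs => rw [← hxy, map_smul_eq_mul, Real.norm_of_nonneg (gauge_nonneg _)]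
    _ ≤ gauge s x * S := mul_le_mul_of_nonneg_left (hS y hy) (gauge_nonneg _)

theorem Seminorm.affine_bound_of_one_le_gauge (p : Seminorm ℝ E) (q : Seminorm ℝ F)
    (L : E →ₗ[ℝ] F) (b : F) {ρ : ℝ} (hc : Convex ℝ s) (hs₀ : s ∈ 𝓝 0)
    (hb : Bornology.IsBounded s) (hsym : ∀ x ∈ s, -x ∈ s)
    (hcontr : ∀ y ∈ frontier s, q (L y + b) ≤ ρ * p y) {x : E} (hx : 1 ≤ gauge s x) :
    q (L x + b) ≤ ρ * p x := by
  have hx₀ : x ≠ 0 := by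
    rintro rfl
    norm_num [gauge_zero] at hx
  obtain ⟨y, hy, hxy⟩ := exists_mem_frontier_gauge_smul_eq hc hs₀ hb hx₀
  have hny : -y ∈ frontier s := by
    rw [← gauge_eq_one_iff_mem_frontier hc hs₀, gauge_neg hsym]
    exact (gauge_eq_one_iff_mem_frontier hc hs₀).2 hy
  rw [← hxy]
  refine p.affine_bound_smul_of_one_le q L b (hcontr y hy) ?_ hx
  simpa only [map_neg_eq_map] using hcontr (-y) hny

end gauge

theorem sublevel_contains_and_strict_decrease_outside_general {n M : ℕ}
    (P : Matrix (Fin n) (Fin n) ℝ) (hP : P.PosDef)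
    (v : (Fin n → ℝ) → ℝ) (hv : ∀ x, v x = Real.sqrt (x ⬝ᵥ P.mulVec x))
    (A : Fin M → Matrix (Fin n) (Fin n) ℝ) (b : Fin M → (Fin n → ℝ))
    (X : Set (Fin n → ℝ)) (hXc : IsCompact X) (hXconv : Convex ℝ X)
    (hX0 : (0 : Fin n → ℝ) ∈ interior X) (hXsym : ∀ x ∈ X, -x ∈ X)
    (ρ : ℝ) (hρ1 : ρ < 1)
    (hcontr : ∀ i : Fin M, ∀ x ∈ frontier X, v ((A i).mulVec x + b i) ≤ ρ * v x)
    (K : Set (Fin n → ℝ)) (hK : K = {x | v x ≤ sSup (v '' frontier X)}) :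
    X ⊆ K ∧ ∀ i : Fin M, ∀ x : Fin n → ℝ, x ∉ K → v ((A i).mulVec x + b i) < v x := by
  obtain rfl : v = hP.posSemidef.seminorm :=
    funext fun x ↦ (hv x).trans (hP.posSemidef.seminorm_apply x).symm
  subst hK
  set p := hP.posSemidef.seminorm
  set S := sSup (p '' frontier X)
  have hX₀ : X ∈ 𝓝 0 := mem_interior_iff_mem_nhds.1 hX0
  have hS : ∀ y ∈ frontier X, p y ≤ S := by
    have hfrontier : IsCompact (frontier X) :=
      hXc.of_isClosed_subset isClosed_frontier hXc.isClosed.frontier_subset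
    exact fun y hy ↦ le_csSup (hfrontier.image hP.posSemidef.continuous_seminorm).bddAbove
      (Set.mem_image_of_mem p hy)
  have hS₀ : 0 ≤ S := Real.sSup_nonneg (by rintro _ ⟨y, -, rfl⟩; exact apply_nonneg p y)
  have hle := p.le_gauge_mul_of_frontier hXconv hX₀ hXc.isBounded hS
  refine ⟨fun x hx ↦ (hle x).trans (mul_le_of_le_one_left hS₀ (gauge_le_one_of_mem hx)),
    fun i x hx ↦ ?_⟩
  have hxS : S < p x := not_le.1 hx
  have hgauge : 1 ≤ gauge X x := by
    by_contra! h
    linarith [hle x, mul_le_of_le_one_left hS₀ h.le]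
  calc p (A i *ᵥ x + b i) ≤ ρ * p x :=
        p.affine_bound_of_one_le_gauge p (A i).mulVecLin (b i) hXconv hX₀ hXc.isBounded hXsym
          (hcontr i) hgauge
    _ < p x := mul_lt_of_lt_one_left (hS₀.trans_lt hxS) hρ1

theorem sublevel_contains_and_strict_decrease_outside {n M : ℕ}
    (P : Matrix (Fin n) (Fin n) ℝ) (hP : P.PosDef)
    (v : (Fin n → ℝ) → ℝ) (hv : ∀ x, v x = Real.sqrt (x ⬝ᵥ P.mulVec x))
    (A : Fin M → Matrix (Fin n) (Fin n) ℝ) (b : Fin M → (Fin n → ℝ))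
    (X : Set (Fin n → ℝ)) (hXc : IsCompact X) (hXconv : Convex ℝ X)
    (hX0 : (0 : Fin n → ℝ) ∈ interior X) (hXsym : ∀ x ∈ X, -x ∈ X)
    (ρ : ℝ) (hρ0 : 0 ≤ ρ) (hρ1 : ρ < 1)
    (hcontr : ∀ i : Fin M, ∀ x ∈ frontier X, v ((A i).mulVec x + b i) ≤ ρ * v x)
    (K : Set (Fin n → ℝ)) (hK : K = {x | v x ≤ sSup (v '' frontier X)}) :
    X ⊆ K ∧ ∀ i : Fin M, ∀ x : Fin n → ℝ, x ∉ K → v ((A i).mulVec x + b i) < v x :=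
  sublevel_contains_and_strict_decrease_outside_general P hP v hv A b X hXc hXconv hX0 hXsym ρ hρ1
    hcontr K hK
end
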